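/- arXiv:2603.28536 — 2 statements merged into one kernel-verified Lean document; each statement's English description precedes it below -/
import Mathlib

section
/- Let K be a number field with ring of integers 𝓞_K, let I be a nonzero ideal of 𝓞_K regarded as an 𝓞_K-module, let α ∈ I be nonzero, and let m ≥ 1. Suppose β is an element of the m-th tensor power I^{⊗m} over 𝓞_K which generates I^{⊗m} as an 𝓞_K-module, and let t ∈ 𝓞_K be such that t·β = α^{⊗m}. Then ∏_{σ : K → ℂ} |σ(t)|^{1/m} = #(I/𝓞_K·α), where the product is over all ring embeddings σ : K → ℂ. -/
open scoped TensorProduct PiTensorProduct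

/-!
Multiplication `I^{⊗m} → 𝓞_K` has image `I^m`, so it sends the generator `β` to a generator of
`I^m`, and `t • β = α^{⊗m}` becomes the ideal identity `(t) * I^m = (α)^m`. Taking absolute norms
and using `N((α)) = #(I/(α)) * N(I)` gives `N((t)) = #(I/(α))^m`, while `N((t)) = |N_{K/ℚ}(t)|` is
the product of the `|σ t|` over the complex embeddings `σ`.
-/

namespace Submodule

variable {R M : Type*} [CommRing R] [AddCommGroup M] [Module R M]

theorem card_quotient_comap_subtype_mul_card_quotient {S T : Submodule R M} (hTS : T ≤ S) :
    Nat.card (S ⧸ T.comap S.subtype) * Nat.card (M ⧸ S) = Nat.card (M ⧸ T) := by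
  rw [← card_quotient_mul_card_quotient S T hTS]
  congr 1
  refine Nat.card_congr (quotEquivOfEq _ _ ?_ ≪≫ₗ (T.mkQ ∘ₗ S.subtype).quotKerEquivRange ≪≫ₗ
    LinearEquiv.ofEq _ _ ?_).toEquiv
  · rw [LinearMap.ker_comp, ker_mkQ]
  · rw [LinearMap.range_comp, range_subtype]

theorem comap_subtype_span_singleton (S : Submodule R M) (x : S) :
    (span R {(x : M)}).comap S.subtype = span R {x} := by
  apply map_injective_of_injective S.injective_subtype
  rw [map_comap_subtype, map_span, Set.image_singleton, subtype_apply,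
    inf_eq_right.mpr ((span_singleton_le_iff_mem _ _).mpr x.2)]

end Submodule

namespace Ideal

variable {R : Type*} [CommRing R]

theorem pow_eq_span_range_prod (I : Ideal R) (n : ℕ) :
    I ^ n = span (Set.range fun x : Fin n → I => ∏ i, (x i : R)) := by
  refine (Submodule.pow_eq_span_pow_set I n).trans (congrArg _ ?_)
  ext a
  simp only [Set.mem_pow, List.prod_ofFn, Set.mem_range]
  rfl

noncomputable def tensorPowMul (I : Ideal R) (m : ℕ) : (⨂[R]^m I) →ₗ[R] R :=
  PiTensorProduct.lift ((MultilinearMap.mkPiAlgebra R (Fin m) R).compLinearMap fun _ => I.subtype)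

@[simp]
theorem tensorPowMul_tprod (I : Ideal R) (m : ℕ) (x : Fin m → I) :
    I.tensorPowMul m (PiTensorProduct.tprod R x) = ∏ i, (x i : R) := by
  simp [tensorPowMul]

theorem range_tensorPowMul (I : Ideal R) (m : ℕ) :
    LinearMap.range (I.tensorPowMul m) = I ^ m := by
  rw [pow_eq_span_range_prod, ← submodule_span_eq, LinearMap.range_eq_map,
    ← PiTensorProduct.span_tprod_eq_top, Submodule.map_span, ← Set.range_comp]
  simp only [Function.comp_def, tensorPowMul_tprod]

theorem span_singleton_mul_pow_eq_span_singleton_pow {I : Ideal R} {m : ℕ} {α : I}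
    {β : ⨂[R]^m I} (hβ : Submodule.span R {β} = ⊤) {t : R}
    (ht : t • β = PiTensorProduct.tprod R fun _ => α) :
    span {t} * I ^ m = span {(α : R)} ^ m := by
  have hgen : I ^ m = span {I.tensorPowMul m β} := by
    rw [← range_tensorPowMul, LinearMap.range_eq_map, ← hβ, Submodule.map_span,
      Set.image_singleton, submodule_span_eq]
  have hmul : t * I.tensorPowMul m β = (α : R) ^ m := by
    rw [← smul_eq_mul, ← LinearMap.map_smul, ht, tensorPowMul_tprod, Finset.prod_const,
      Finset.card_univ, Fintype.card_fin]
  rw [hgen, span_singleton_mul_span_singleton, hmul, span_singleton_pow]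

variable [IsDedekindDomain R] [Module.Free ℤ R]

theorem absNorm_span_singleton_eq_card_quotient_mul_absNorm (I : Ideal R) (α : I) :
    absNorm (span {(α : R)}) = Nat.card (I ⧸ Submodule.span R {α}) * absNorm I := by
  rw [absNorm_apply, absNorm_apply, Submodule.cardQuot_apply, Submodule.cardQuot_apply,
    ← Submodule.card_quotient_comap_subtype_mul_card_quotient
      ((span_singleton_le_iff_mem I).mpr α.2), ← submodule_span_eq,
    Submodule.comap_subtype_span_singleton]

theorem absNorm_span_singleton_eq_card_pow [Module.Finite ℤ R] {I : Ideal R} (hI : I ≠ ⊥)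
    {m : ℕ} {α : I} {t : R} (h : span {t} * I ^ m = span {(α : R)} ^ m) :
    absNorm (span {t}) = Nat.card (I ⧸ Submodule.span R {α}) ^ m := by
  have hI' : absNorm I ^ m ≠ 0 := pow_ne_zero m (absNorm_eq_zero_iff.not.mpr hI)
  apply Nat.eq_of_mul_eq_mul_right (Nat.pos_of_ne_zero hI')
  rw [← mul_pow, ← absNorm_span_singleton_eq_card_quotient_mul_absNorm, ← map_pow, ← map_pow,
    ← map_mul, h]

end Ideal

open NumberField in
theorem NumberField.prod_norm_embeddings_eq_absNorm {K : Type*} [Field K] [NumberField K]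
    (x : 𝓞 K) : ∏ σ : K →+* ℂ, ‖σ x‖ = Ideal.absNorm (Ideal.span {x}) := by
  have hnorm := congr_arg (‖·‖) (Algebra.norm_eq_prod_embeddings ℚ ℂ (x : K))
  rw [norm_prod] at hnorm
  rw [Fintype.prod_equiv (RingHom.equivRatAlgHom K ℂ) (fun σ => ‖σ x‖)
    (fun σ => ‖σ x‖) fun _ => by simp [RingHom.equivRatAlgHom_apply], ← hnorm,
    Ideal.absNorm_span_singleton, eq_ratCast, ← Algebra.coe_norm_int, Rat.cast_intCast,
    Complex.norm_intCast, Nat.cast_natAbs, Int.cast_abs]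

theorem prod_abs_rpow_eq_card_quotient_general
    (K : Type*) [Field K] [NumberField K]
    (I : Ideal (NumberField.RingOfIntegers K)) (hI : I ≠ 0)
    (α : I) (m : ℕ) (hm : 1 ≤ m)
    (β : ⨂[NumberField.RingOfIntegers K]^m I)
    (hβ : Submodule.span (NumberField.RingOfIntegers K) {β} = ⊤)
    (t : NumberField.RingOfIntegers K)
    (ht : t • β = PiTensorProduct.tprod (NumberField.RingOfIntegers K) (fun _ : Fin m => α)) :
    ∏ σ : K →+* ℂ, ‖σ (t : K)‖ ^ ((m : ℝ))⁻¹ =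
      Nat.card (I ⧸ Submodule.span (NumberField.RingOfIntegers K) {α}) := by
  have hnorm := Ideal.absNorm_span_singleton_eq_card_pow hI
    (Ideal.span_singleton_mul_pow_eq_span_singleton_pow hβ ht)
  rw [Real.finsetProd_rpow _ _ fun _ _ => norm_nonneg _,
    NumberField.prod_norm_embeddings_eq_absNorm, hnorm, Nat.cast_pow,
    Real.pow_rpow_inv_natCast (Nat.cast_nonneg _) (by omega)]

/-- If `β` generates the `m`-th tensor power `I^{⊗m}` of a nonzero ideal `I` of the ring
of integers of a number field, and `t·β = α^{⊗m}` for a nonzero `α ∈ I`, then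
`∏_σ |σ(t)|^(1/m) = #(I/𝓞_K·α)`, the product running over all embeddings `σ : K → ℂ`. -/
theorem prod_abs_rpow_eq_card_quotient
    (K : Type*) [Field K] [NumberField K]
    (I : Ideal (NumberField.RingOfIntegers K)) (hI : I ≠ 0)
    (α : I) (hα : α ≠ 0) (m : ℕ) (hm : 1 ≤ m)
    (β : ⨂[NumberField.RingOfIntegers K]^m I)
    (hβ : Submodule.span (NumberField.RingOfIntegers K) {β} = ⊤)
    (t : NumberField.RingOfIntegers K)
    (ht : t • β = PiTensorProduct.tprod (NumberField.RingOfIntegers K) (fun _ : Fin m => α)) :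
    ∏ σ : K →+* ℂ, ‖σ (t : K)‖ ^ ((m : ℝ))⁻¹ =
      Nat.card (I ⧸ Submodule.span (NumberField.RingOfIntegers K) {α}) :=
  prod_abs_rpow_eq_card_quotient_general K I hI α m hm β hβ t ht
end

section
/- Let E be a subfield of ℂ with [E : ℚ] = 2 which is not contained in ℝ (an imaginary quadratic field), and suppose z_E ∈ ℂ with Im(z_E) > 0 is such that the ring of integers 𝓞_E, viewed as an additive subgroup of ℂ, equals ℤz_E + ℤ. Let J be a fractional ideal of 𝓞_E with 𝓞_E ⊆ J, and suppose z ∈ ℂ with Im(z) > 0 is such that J, viewed as an additive subgroup of ℂ, equals ℤz + ℤ. Then the absolute norm of J satisfies N(J) = Im(z)/Im(z_E); equivalently, #(J/𝓞_E) = Im(z)/Im(z_E). -/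
open scoped nonZeroDivisors NumberField

/-!
Both `𝓞_E` and `J` are free of rank two over `ℤ`, with bases `(ω, 1)` and `(ζ, 1)` lying over
`(z_E, 1)` and `(z, 1)`. The norm of `J` is the absolute value of the determinant of the change of
`ℚ`-basis, which is the `ω`-coordinate `q` of `ζ = q ω + r`; taking imaginary parts of
`z = q z_E + r` gives `Im z = q Im z_E`.
-/

theorem linearIndependent_int_pair_of_im_ne_zero {w : ℂ} (hw : w.im ≠ 0) :
    LinearIndependent ℤ ![w, 1] := by
  rw [LinearIndependent.pair_iff]
  intro s t hst
  have hs : s = 0 := by simpa [hw] using congrArg Complex.im hst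
  subst hs
  exact ⟨rfl, by simpa using hst⟩

theorem exists_basis_apply_eq_of_range_eq_closure_pair {M : Type*} [AddCommGroup M]
    (f : M →+ ℂ) (hf : Function.Injective f) {w : ℂ} (hw : w.im ≠ 0)
    (hrange : f.range = AddSubgroup.closure {w, 1}) :
    ∃ b : Module.Basis (Fin 2) ℤ M, f (b 0) = w ∧ f (b 1) = 1 := by
  have hmem (x : ℂ) (hx : x ∈ AddSubgroup.closure ({w, 1} : Set ℂ)) : ∃ a, f a = x := by
    rwa [← hrange] at hx
  obtain ⟨x, hx⟩ := hmem w (AddSubgroup.subset_closure (by simp))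
  obtain ⟨y, hy⟩ := hmem 1 (AddSubgroup.subset_closure (by simp))
  have hli : LinearIndependent ℤ ![x, y] := by
    refine LinearIndependent.of_comp f.toIntLinearMap ?_
    have hfxy : ⇑f.toIntLinearMap ∘ ![x, y] = ![w, 1] := by
      ext i; fin_cases i <;> simp [hx, hy]
    rw [hfxy]
    exact linearIndependent_int_pair_of_im_ne_zero hw
  have hsp : ⊤ ≤ Submodule.span ℤ (Set.range ![x, y]) := by
    rintro a -
    obtain ⟨m, n, hmn⟩ :=
      AddSubgroup.mem_closure_pair.mp (hrange ▸ ⟨a, rfl⟩ : f a ∈ AddSubgroup.closure {w, 1})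
    have ha : a = m • x + n • y := hf (by simp only [map_add, map_zsmul, hx, hy, hmn])
    rw [ha]
    exact Submodule.add_mem _ (Submodule.smul_mem _ _ (Submodule.subset_span ⟨0, rfl⟩))
      (Submodule.smul_mem _ _ (Submodule.subset_span ⟨1, rfl⟩))
  exact ⟨Module.Basis.mk hli hsp, by simp [hx], by simp [hy]⟩

theorem Module.Basis.det_fin_two_of_apply_one {R M : Type*} [CommRing R] [AddCommGroup M]
    [Module R M] (b : Module.Basis (Fin 2) R M) (x : M) : b.det ![x, b 1] = b.repr x 0 := by
  simp [Module.Basis.det_apply, Matrix.det_fin_two, Module.Basis.toMatrix_apply]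

theorem Subfield.im_coe_eq_repr_mul_im {E : Subfield ℂ} (b : Module.Basis (Fin 2) ℚ E)
    (hb : ((b 1 : E) : ℂ) = 1) (x : E) : (x : ℂ).im = b.repr x 0 * ((b 0 : E) : ℂ).im := by
  conv_lhs => rw [← b.sum_repr x]
  simp [Fin.sum_univ_two, hb, Rat.smul_def]

theorem absNorm_fractionalIdeal_eq_ratio_of_im_general
    (E : Subfield ℂ) [NumberField ↥E]
    (zE : ℂ) (hzE : 0 < zE.im)
    (hOE : ∀ x : ℂ, x ∈ AddSubgroup.closure ({zE, 1} : Set ℂ) ↔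
      ∃ a : NumberField.RingOfIntegers ↥E, ((a : ↥E) : ℂ) = x)
    (J : FractionalIdeal (NumberField.RingOfIntegers ↥E)⁰ ↥E)
    (z : ℂ) (hz : 0 < z.im)
    (hJz : ∀ x : ℂ, x ∈ AddSubgroup.closure ({z, 1} : Set ℂ) ↔
      ∃ a : ↥E, a ∈ J ∧ (a : ℂ) = x) :
    (FractionalIdeal.absNorm J : ℝ) = z.im / zE.im := by
  obtain ⟨bO, hbO0, hbO1⟩ := exists_basis_apply_eq_of_range_eq_closure_pair
    (E.subtype.toAddMonoidHom.comp (algebraMap (𝓞 E) E).toAddMonoidHom)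
    (Subtype.coe_injective.comp NumberField.RingOfIntegers.coe_injective) hzE.ne'
    (AddSubgroup.ext fun x => (hOE x).symm)
  obtain ⟨bJ, hbJ0, hbJ1⟩ := exists_basis_apply_eq_of_range_eq_closure_pair
    (E.subtype.toAddMonoidHom.comp (J : Submodule (𝓞 E) E).subtype.toAddMonoidHom)
    (Subtype.coe_injective.comp Subtype.coe_injective) hz.ne'
    (AddSubgroup.ext fun x => by simp [hJz])
  set b := bO.localizationLocalization ℚ ℤ⁰ E
  have hb0 : ((b 0 : E) : ℂ) = zE := by
    simpa [b, Module.Basis.localizationLocalization_apply] using hbO0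
  have hb1 : ((b 1 : E) : ℂ) = 1 := by
    simpa [b, Module.Basis.localizationLocalization_apply] using hbO1
  have hbJ : (↑) ∘ bJ = ![(bJ 0 : E), b 1] := by
    funext i; fin_cases i
    · rfl
    · exact Subtype.coe_injective (hbJ1.trans hb1.symm)
  have him : z.im = b.repr (bJ 0) 0 * zE.im := by
    rw [← hbJ0, ← hb0]
    exact Subfield.im_coe_eq_repr_mul_im b hb1 _
  have hq : (0 : ℝ) < b.repr (bJ 0) 0 := (pos_iff_pos_of_mul_pos (him ▸ hz)).2 hzE
  have hnorm := FractionalIdeal.abs_det_basis_change bO J bJ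
  rw [hbJ, Module.Basis.det_fin_two_of_apply_one] at hnorm
  rw [← hnorm, eq_div_iff hzE.ne', him, Rat.cast_abs, abs_of_pos hq]

/-- Let `E ⊆ ℂ` be an imaginary quadratic field whose ring of integers is the lattice
`ℤz_E + ℤ` (with `Im z_E > 0`), and let `J ⊇ 𝓞_E` be a fractional ideal which, as a
subset of `ℂ`, is the lattice `ℤz + ℤ` (with `Im z > 0`). Then `N(J) = Im z / Im z_E`. -/
theorem absNorm_fractionalIdeal_eq_ratio_of_im
    (E : Subfield ℂ) [NumberField ↥E]
    (hdeg : Module.finrank ℚ E = 2)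
    (himag : ∃ x : E, (x : ℂ).im ≠ 0)
    (zE : ℂ) (hzE : 0 < zE.im)
    (hOE : ∀ x : ℂ, x ∈ AddSubgroup.closure ({zE, 1} : Set ℂ) ↔
      ∃ a : NumberField.RingOfIntegers ↥E, ((a : ↥E) : ℂ) = x)
    (J : FractionalIdeal (NumberField.RingOfIntegers ↥E)⁰ ↥E) (hJ : 1 ≤ J)
    (z : ℂ) (hz : 0 < z.im)
    (hJz : ∀ x : ℂ, x ∈ AddSubgroup.closure ({z, 1} : Set ℂ) ↔
      ∃ a : ↥E, a ∈ J ∧ (a : ℂ) = x) :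
    (FractionalIdeal.absNorm J : ℝ) = z.im / zE.im :=
  absNorm_fractionalIdeal_eq_ratio_of_im_general E zE hzE hOE J z hz hJz
end
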